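/- Let k be a field, Ψ a finite-dimensional k-vector space, and for i = 1,…,n let u_i : Ψ → Φ_i and v_i : Φ_i → Ψ be linear maps. Set T_i := 1 - v_i u_i, 𝕋_i := 1 - u_i v_i. Define S_β as the block upper-triangular matrix with identity blocks on the diagonal and (i,j) block u_i v_j for i < j; define S_{-β} as the block lower-triangular matrix with diagonal blocks 𝕋_i and (i,j) block -u_i v_j for i > j. Define U_i := u_i T_{i+1} T_{i+2} ⋯ T_n : Ψ → Φ_i and V_i := v_i : Φ_i → Ψ, and let U_Σ : Ψ → ⊕_i Φ_i and V_Σ : ⊕_i Φ_i → Ψ be the induced maps. Then S_β^{-1} · S_{-β} = 1 - U_Σ V_Σ as endomorphisms of ⊕_{i=1}^n Φ_i. -/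

import Mathlib

open scoped BigOperators

variable {k : Type*} [Field k] {n : ℕ} {Ψ : Type*}
  [AddCommGroup Ψ] [Module k Ψ] [FiniteDimensional k Ψ]
  {Φ : Fin n → Type*} [∀ i, AddCommGroup (Φ i)] [∀ i, Module k (Φ i)]
  [∀ i, FiniteDimensional k (Φ i)]

/-- The ordered product (composition) of the endomorphisms `T l` for `l` running through the
finite set `s` in increasing order: for `s = {a₁ < a₂ < ⋯ < a_r}` this is `T a₁ ∘ T a₂ ∘ ⋯ ∘ T a_r`
(the identity if `s` is empty). -/
def orderedProd (T : Fin n → Module.End k Ψ) (s : Finset (Fin n)) : Module.End k Ψ :=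
  ((s.sort (· ≤ ·)).map T).prod

/-- The local monodromies `T_i := 1 - v_i u_i` of the quiver `(Ψ, Φ_i, u_i, v_i)`. -/
def quiverT (u : ∀ i, Ψ →ₗ[k] Φ i) (v : ∀ i, Φ i →ₗ[k] Ψ) (i : Fin n) : Module.End k Ψ :=
  1 - v i ∘ₗ u i

/-- The Stokes multiplier `S_β`: the block upper-unitriangular endomorphism of `⊕ᵢ Φᵢ` with
identity diagonal blocks and `(i,j)` block `u_i ∘ v_j` for `i < j`. -/
def Sbeta (u : ∀ i, Ψ →ₗ[k] Φ i) (v : ∀ i, Φ i →ₗ[k] Ψ) :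
    Module.End k (∀ i, Φ i) :=
  LinearMap.pi fun i =>
    (LinearMap.proj i : (∀ i, Φ i) →ₗ[k] Φ i) +
      ∑ j, if i < j then (u i ∘ₗ v j) ∘ₗ (LinearMap.proj j) else 0

/-- The block upper-unitriangular endomorphism of `⊕ᵢ Φᵢ` with identity diagonal blocks and
`(i,j)` block `-u_i T_{i+1} T_{i+2} ⋯ T_{j-1} v_j` for `i < j`. -/
def SbetaInv (u : ∀ i, Ψ →ₗ[k] Φ i) (v : ∀ i, Φ i →ₗ[k] Ψ) :
    Module.End k (∀ i, Φ i) :=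
  LinearMap.pi fun i =>
    (LinearMap.proj i : (∀ i, Φ i) →ₗ[k] Φ i) -
      ∑ j, if i < j then
        (u i ∘ₗ (orderedProd (quiverT u v) (Finset.Ioo i j) : Ψ →ₗ[k] Ψ) ∘ₗ v j) ∘ₗ
          (LinearMap.proj j : (∀ l, Φ l) →ₗ[k] Φ j)
      else 0


/-- The Stokes multiplier `S_{-β}`: the block lower-triangular endomorphism of `⊕ᵢ Φᵢ` with
diagonal blocks `𝕋_i = 1 - u_i v_i` and `(i,j)` block `-u_i ∘ v_j` for `i > j`. -/
def Sminus (u : ∀ i, Ψ →ₗ[k] Φ i) (v : ∀ i, Φ i →ₗ[k] Ψ) :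
    Module.End k (∀ i, Φ i) :=
  LinearMap.pi fun i =>
    ((LinearMap.id - u i ∘ₗ v i) ∘ₗ (LinearMap.proj i : (∀ l, Φ l) →ₗ[k] Φ i)) -
      ∑ j, if j < i then (u i ∘ₗ v j) ∘ₗ (LinearMap.proj j : (∀ l, Φ l) →ₗ[k] Φ j) else 0

/-- `U_i := u_i T_{i+1} T_{i+2} ⋯ T_n : Ψ → Φ_i`. -/
def Ucomp (u : ∀ i, Ψ →ₗ[k] Φ i) (v : ∀ i, Φ i →ₗ[k] Ψ) (i : Fin n) : Ψ →ₗ[k] Φ i :=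
  u i ∘ₗ (orderedProd (quiverT u v) (Finset.Ioi i) : Ψ →ₗ[k] Ψ)

/-- `U_Σ = ᵗ(U_1, …, U_n) : Ψ → ⊕ᵢ Φᵢ`. -/
def USigma (u : ∀ i, Ψ →ₗ[k] Φ i) (v : ∀ i, Φ i →ₗ[k] Ψ) : Ψ →ₗ[k] (∀ i, Φ i) :=
  LinearMap.pi fun i => Ucomp u v i

/-- `V_Σ = (v_1, …, v_n) : ⊕ᵢ Φᵢ → Ψ`. -/
def VSigma (v : ∀ i, Φ i →ₗ[k] Ψ) : (∀ i, Φ i) →ₗ[k] Ψ :=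
  ∑ i, v i ∘ₗ (LinearMap.proj i : (∀ l, Φ l) →ₗ[k] Φ i)

/-!
Write `S_β = 1 + N`. Row `i` of `N` only reads the components of index `> i`, so `N` is
nilpotent and `S_β` is a unit. It then suffices to show `S_β (1 - U_Σ V_Σ) = S_{-β}`. In row `i`
this comes down to `U_i + ∑_{j > i} u_i v_j U_j = u_i`, which is `u_i` composed with the
telescoping identity `T_{i+1} ⋯ T_n + ∑_{j > i} (1 - T_j) T_{j+1} ⋯ T_n = 1`.
-/

def IsStrictBlockUpper {R : Type*} [Semiring R] {m : ℕ} {M : Fin m → Type*}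
    [∀ i, AddCommMonoid (M i)] [∀ i, Module R (M i)] (N : Module.End R (∀ i, M i)) : Prop :=
  ∀ x i, (∀ j, i < j → x j = 0) → N x i = 0

namespace IsStrictBlockUpper

variable {R : Type*} [Semiring R] {m : ℕ} {M : Fin m → Type*}
  [∀ i, AddCommMonoid (M i)] [∀ i, Module R (M i)] {N : Module.End R (∀ i, M i)}

theorem pow_apply_eq_zero (hN : IsStrictBlockUpper N) (p : ℕ) (x : ∀ i, M i) (i : Fin m)
    (hi : m ≤ i + p) : (N ^ p) x i = 0 := by
  induction p generalizing i with
  | zero => omega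
  | succ p ih =>
    rw [pow_succ', Module.End.mul_apply]
    exact hN _ i fun j hij => ih j (by rw [Fin.lt_def] at hij; omega)

theorem isNilpotent (hN : IsStrictBlockUpper N) : IsNilpotent N :=
  ⟨m, LinearMap.ext fun x => funext fun i => hN.pow_apply_eq_zero m x i (by omega)⟩

end IsStrictBlockUpper

section

omit [FiniteDimensional k Ψ] [∀ i, FiniteDimensional k (Φ i)]

theorem orderedProd_insert_of_forall_lt (T : Fin n → Module.End k Ψ) {a : Fin n}
    {s : Finset (Fin n)} (h : ∀ b ∈ s, a < b) :
    orderedProd T (insert a s) = T a * orderedProd T s := by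
  rw [orderedProd, Finset.sort_insert _ (fun b hb => (h b hb).le) fun ha => (h a ha).false,
    List.map_cons, List.prod_cons, orderedProd]

theorem orderedProd_add_sum_one_sub_mul (T : Fin n → Module.End k Ψ) (s : Finset (Fin n)) :
    orderedProd T s + ∑ l ∈ s, (1 - T l) * orderedProd T (s.filter (l < ·)) = 1 := by
  induction s using Finset.induction_on_min with
  | empty => simp [orderedProd]
  | insert a s ha ih =>
    have filter_a : (insert a s).filter (a < ·) = s := by
      rw [Finset.filter_insert, if_neg (lt_irrefl a), Finset.filter_true_of_mem ha]
    have filter_l : ∀ l ∈ s, (insert a s).filter (l < ·) = s.filter (l < ·) := fun l hl => by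
      rw [Finset.filter_insert, if_neg (ha l hl).asymm]
    rw [Finset.sum_insert fun h => (ha a h).false, filter_a,
      Finset.sum_congr rfl fun l hl => by rw [filter_l l hl],
      orderedProd_insert_of_forall_lt T ha, ← add_assoc, ← add_mul, add_sub_cancel, one_mul, ih]

theorem orderedProd_Ioi_add_sum (T : Fin n → Module.End k Ψ) (i : Fin n) :
    orderedProd T (Finset.Ioi i) +
      ∑ l ∈ Finset.Ioi i, (1 - T l) * orderedProd T (Finset.Ioi l) = 1 := by
  have filter_Ioi : ∀ l ∈ Finset.Ioi i, (Finset.Ioi i).filter (l < ·) = Finset.Ioi l :=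
    fun l hl => by
      ext j
      simp only [Finset.mem_filter, Finset.mem_Ioi] at hl ⊢
      exact ⟨And.right, fun hj => ⟨hl.trans hj, hj⟩⟩
  refine Eq.trans ?_ (orderedProd_add_sum_one_sub_mul T (Finset.Ioi i))
  rw [Finset.sum_congr rfl fun l hl => by rw [← filter_Ioi l hl]]

variable (u : ∀ i, Ψ →ₗ[k] Φ i) (v : ∀ i, Φ i →ₗ[k] Ψ)

theorem Ucomp_add_sum_apply (i : Fin n) (w : Ψ) :
    Ucomp u v i w + ∑ j ∈ Finset.Ioi i, u i (v j (Ucomp u v j w)) = u i w := by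
  have h := congrArg (fun P : Module.End k Ψ => u i (P w))
    (orderedProd_Ioi_add_sum (quiverT u v) i)
  simpa [quiverT, Ucomp, LinearMap.sum_apply] using h

theorem Sbeta_apply (x : ∀ i, Φ i) (i : Fin n) :
    Sbeta u v x i = x i + ∑ j ∈ Finset.Ioi i, u i (v j (x j)) := by
  simp [Sbeta, LinearMap.sum_apply, Finset.sum_ite, Finset.filter_lt_eq_Ioi]

theorem Sminus_apply (x : ∀ i, Φ i) (i : Fin n) :
    Sminus u v x i = x i - ∑ j ∈ Finset.Iic i, u i (v j (x j)) := by
  simp [Sminus, LinearMap.sum_apply, Finset.sum_ite, Finset.filter_gt_eq_Iio,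
    ← Finset.Iio_insert, sub_sub]

theorem VSigma_apply (x : ∀ i, Φ i) : VSigma v x = ∑ j, v j (x j) := by
  simp [VSigma, LinearMap.sum_apply]

theorem isStrictBlockUpper_Sbeta_sub_one : IsStrictBlockUpper (Sbeta u v - 1) := by
  intro x i hx
  simp only [LinearMap.sub_apply, Pi.sub_apply, Sbeta_apply, Module.End.one_apply,
    add_sub_cancel_left]
  exact Finset.sum_eq_zero fun j hj => by rw [hx j (Finset.mem_Ioi.1 hj), map_zero, map_zero]

theorem isUnit_Sbeta : IsUnit (Sbeta u v) := by
  simpa using (isStrictBlockUpper_Sbeta_sub_one u v).isNilpotent.isUnit_one_add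

theorem Sbeta_mul_one_sub_USigma_comp_VSigma :
    Sbeta u v * (1 - USigma u v ∘ₗ VSigma v) = Sminus u v := by
  refine LinearMap.ext fun x => funext fun i => ?_
  have hU := Ucomp_add_sum_apply u v i (VSigma v x)
  have hw : u i (VSigma v x) =
      ∑ j ∈ Finset.Iic i, u i (v j (x j)) + ∑ j ∈ Finset.Ioi i, u i (v j (x j)) := by
    rw [VSigma_apply, map_sum, ← Finset.sum_filter_add_sum_filter_not Finset.univ (· ≤ i)]
    simp [Finset.filter_ge_eq_Iic, Finset.filter_lt_eq_Ioi]
  simp only [Module.End.mul_apply, Sbeta_apply, Sminus_apply, LinearMap.sub_apply,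
    Module.End.one_apply, LinearMap.comp_apply, Pi.sub_apply, USigma, LinearMap.pi_apply,
    map_sub, Finset.sum_sub_distrib]
  linear_combination (norm := module) -hU - hw

end

/-- `S_β` is invertible and `S_β⁻¹ ⬝ S_{-β} = 1 - U_Σ V_Σ`, the monodromy of `⊕ᵢ Φᵢ`
around `∞`. -/
theorem stmt_2 (u : ∀ i, Ψ →ₗ[k] Φ i) (v : ∀ i, Φ i →ₗ[k] Ψ) :
    IsUnit (Sbeta u v) ∧
      Ring.inverse (Sbeta u v) * Sminus u v =
        1 - USigma u v ∘ₗ VSigma v := by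
  refine ⟨isUnit_Sbeta u v, ?_⟩
  rw [← Sbeta_mul_one_sub_USigma_comp_VSigma u v,
    Ring.inverse_mul_cancel_left _ _ (isUnit_Sbeta u v)]
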